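/- Let (X_i) be i.i.d. nonnegative integrable random variables with mean μ > 0, and let c ≥ μ. Define B(0) = 0 and B(i) = B(i-1) + X_i − min(B(i-1), c). Then almost surely (1/N) Σ_{i=1}^N min(B(i-1), c) → μ as N → ∞, i.e. for any constant desired power c ≥ μ the long-run average extracted power equals μ. -/

import Mathlib

open Filter MeasureTheory ProbabilityTheory Topology

/-- Battery with constant desired power `c`:
`B 0 = 0`, `B (i+1) = B i + X (i+1) - min (B i) c`. -/
def batteryConst (X : ℕ → ℝ) (c : ℝ) : ℕ → ℝ
  | 0 => 0
  | i + 1 => batteryConst X c i + X (i + 1) - min (batteryConst X c i) c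

lemma batteryConst_succ (x : ℕ → ℝ) (c : ℝ) (N : ℕ) :
    batteryConst x c (N + 1)
      = batteryConst x c N + x (N + 1) - min (batteryConst x c N) c := rfl

lemma batteryConst_nonneg (x : ℕ → ℝ) (c : ℝ) (hx : ∀ i, 0 ≤ x i) :
    ∀ N, 0 ≤ batteryConst x c N := by
  intro N
  induction N with
  | zero => simp [batteryConst]
  | succ n ih =>
    rw [batteryConst_succ]
    linarith [hx (n + 1), min_le_left (batteryConst x c n) c]

lemma batteryConst_sum (x : ℕ → ℝ) (c : ℝ) :
    ∀ N, ∑ i ∈ Finset.Icc 1 N, min (batteryConst x c (i - 1)) c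
      = (∑ i ∈ Finset.Icc 1 N, x i) - batteryConst x c N := by
  intro N
  induction N with
  | zero => simp [batteryConst]
  | succ n ih =>
    rw [Finset.sum_Icc_succ_top (by omega : 1 ≤ n + 1),
      Finset.sum_Icc_succ_top (by omega : 1 ≤ n + 1), ih]
    simp only [Nat.add_sub_cancel]
    rw [batteryConst_succ]
    ring

lemma batteryConst_bound (x : ℕ → ℝ) (c : ℝ) (hx : ∀ i, 0 ≤ x i) (hc : 0 ≤ c) :
    ∀ N, ∃ k, k < N + 1 ∧ batteryConst x c (N + 1) ≤
      (∑ i ∈ Finset.Icc 1 (N + 1), x i) - (∑ i ∈ Finset.Icc 1 k, x i)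
        - (((N : ℝ) + 1) - 1 - k) * c := by
  intro N
  induction N with
  | zero =>
    refine ⟨0, by omega, ?_⟩
    simp [batteryConst, min_eq_left hc]
  | succ n ih =>
    obtain ⟨k, hk, hB⟩ := ih
    rcases le_or_gt (batteryConst x c (n + 1)) c with h | h
    · refine ⟨n + 1, by omega, ?_⟩
      have hBe : batteryConst x c (n + 2) = x (n + 2) := by
        rw [batteryConst_succ, min_eq_left h]; ring
      rw [hBe, Finset.sum_Icc_succ_top (by omega : 1 ≤ n + 2)]
      push_cast
      ring_nf
      linarith [Finset.sum_nonneg (fun i _ => hx i :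
        ∀ i ∈ Finset.Icc 1 (n + 2), 0 ≤ x i)]
    · refine ⟨k, by omega, ?_⟩
      have hBe : batteryConst x c (n + 2)
          = batteryConst x c (n + 1) + x (n + 2) - c := by
        rw [batteryConst_succ, min_eq_right h.le]
      rw [hBe, Finset.sum_Icc_succ_top (by omega : 1 ≤ n + 2)]
      push_cast
      push_cast at hB
      linarith

lemma batteryConst_div_tendsto_zero (x : ℕ → ℝ) (m c : ℝ) (hx : ∀ i, 0 ≤ x i)
    (hm : 0 < m) (hc : m ≤ c)
    (hS : Tendsto (fun N : ℕ => (N : ℝ)⁻¹ * ∑ i ∈ Finset.Icc 1 N, x i) atTop (𝓝 m)) :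
    Tendsto (fun N : ℕ => (N : ℝ)⁻¹ * batteryConst x c N) atTop (𝓝 0) := by
  have hc0 : 0 ≤ c := hm.le.trans hc
  rw [Metric.tendsto_atTop] at hS ⊢
  intro ε hε
  have hε' : (0 : ℝ) < ε / 4 := by linarith
  obtain ⟨K0, hK0⟩ := hS (ε / 4) hε'
  set K := max K0 1 with hKdef
  -- bounds on partial sums for n ≥ K
  have hSb : ∀ n : ℕ, K ≤ n →
      (m - ε / 4) * n ≤ (∑ i ∈ Finset.Icc 1 n, x i) ∧
      (∑ i ∈ Finset.Icc 1 n, x i) ≤ (m + ε / 4) * n := by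
    intro n hn
    have hn1 : 1 ≤ n := le_trans (le_max_right _ _) hn
    have hnpos : (0 : ℝ) < n := by exact_mod_cast hn1
    have := hK0 n (le_trans (le_max_left _ _) hn)
    rw [Real.dist_eq, abs_lt] at this
    have hrw : (∑ i ∈ Finset.Icc 1 n, x i)
        = (n : ℝ) * ((n : ℝ)⁻¹ * ∑ i ∈ Finset.Icc 1 n, x i) := by
      field_simp
    constructor
    · rw [hrw]; nlinarith [this.1]
    · rw [hrw]; nlinarith [this.2]
  -- choose M large enough for the constant term
  obtain ⟨M, hM⟩ := exists_nat_ge (((K : ℝ) + 2) * c / (ε / 4))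
  refine ⟨max (K + 1) (max M 1), fun N hN => ?_⟩
  have hNK : K + 1 ≤ N := le_trans (le_max_left _ _) hN
  have hNM : M ≤ N := le_trans (le_trans (le_max_left _ _) (le_max_right _ _)) hN
  have hN1 : 1 ≤ N := by omega
  have hNpos : (0 : ℝ) < N := by exact_mod_cast hN1
  -- key bound on the battery
  obtain ⟨N', rfl⟩ : ∃ N', N = N' + 1 := ⟨N - 1, by omega⟩
  obtain ⟨k, hk, hB⟩ := batteryConst_bound x c hx hc0 N'
  set N := N' + 1
  have hkN : (k : ℝ) ≤ (N : ℝ) - 1 := by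
    have : (k : ℝ) + 1 ≤ N := by exact_mod_cast hk
    linarith
  have hSN := hSb N (by omega)
  have hBbound : batteryConst x c N ≤ 2 * (ε / 4) * N + ((K : ℝ) + 2) * c := by
    rcases le_or_gt K k with hkK | hkK
    · -- k ≥ K : use lower bound on S k
      have hSk := (hSb k hkK).1
      have hcast : (((N' : ℝ) + 1) - 1 - k) = (N : ℝ) - 1 - k := by push_cast [N]; ring
      rw [hcast] at hB
      nlinarith [hSN.2, mul_nonneg (by linarith : (0 : ℝ) ≤ c + ε / 4 - m)
        (by linarith : (0 : ℝ) ≤ (N : ℝ) - 1 - k + 1)]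
    · -- k < K : use S k ≥ 0
      have hSk : (0 : ℝ) ≤ ∑ i ∈ Finset.Icc 1 k, x i :=
        Finset.sum_nonneg fun i _ => hx i
      have hkK' : (k : ℝ) + 1 ≤ (K : ℝ) := by exact_mod_cast hkK
      have hcast : (((N' : ℝ) + 1) - 1 - k) = (N : ℝ) - 1 - k := by push_cast [N]; ring
      rw [hcast] at hB
      nlinarith [hSN.2, mul_nonneg hc0 (by linarith : (0 : ℝ) ≤ (K : ℝ) - 1 - k)]
  have hBnn := batteryConst_nonneg x c hx N
  have hdist : dist ((N : ℝ)⁻¹ * batteryConst x c N) 0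
      = (N : ℝ)⁻¹ * batteryConst x c N := by
    rw [Real.dist_eq, sub_zero, abs_of_nonneg]
    positivity
  rw [hdist]
  have hMc : ((K : ℝ) + 2) * c ≤ ε / 4 * N := by
    have hMN : (M : ℝ) ≤ N := by exact_mod_cast hNM
    have : ((K : ℝ) + 2) * c ≤ ε / 4 * M := by
      rw [div_le_iff₀ hε'] at hM
      linarith [hM]
    linarith [mul_le_mul_of_nonneg_left hMN hε'.le]
  have h1 : (N : ℝ)⁻¹ * batteryConst x c N
      ≤ (N : ℝ)⁻¹ * (2 * (ε / 4) * N + ε / 4 * N) := by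
    apply mul_le_mul_of_nonneg_left _ (by positivity)
    linarith
  have h2 : (N : ℝ)⁻¹ * (2 * (ε / 4) * N + ε / 4 * N) = 3 * (ε / 4) := by
    field_simp; ring
  rw [h2] at h1
  linarith

/-- For i.i.d. nonnegative integrable harvested powers with mean `m > 0` and any constant
desired power `c ≥ m`, the long-run average extracted power equals `m` almost surely. -/
theorem average_extracted_power_eq_mean
    {Ω : Type*} [MeasurableSpace Ω] (μ : Measure Ω) [IsProbabilityMeasure μ]
    (X : ℕ → Ω → ℝ)
    (hmeas : ∀ i, Measurable (X i))
    (hnonneg : ∀ i, ∀ ω, 0 ≤ X i ω)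
    (hint : Integrable (X 0) μ)
    (hindep : Pairwise (Function.onFun (IndepFun · · μ) X))
    (hident : ∀ i, IdentDistrib (X i) (X 0) μ μ)
    (m c : ℝ) (hm : 0 < m) (hmean : μ[X 0] = m) (hc : m ≤ c) :
    ∀ᵐ ω ∂μ, Tendsto (fun N : ℕ =>
      (N : ℝ)⁻¹ * ∑ i ∈ Finset.Icc 1 N,
        min (batteryConst (fun j => X j ω) c (i - 1)) c)
      atTop (nhds m) := by
  -- strong law for the shifted sequence `Y i = X (i+1)`
  have hint1 : Integrable (X 1) μ := (hident 1).integrable_iff.mpr hint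
  have hindepY : Pairwise (Function.onFun (IndepFun · · μ) fun i => X (i + 1)) :=
    fun i j hij => hindep (show i + 1 ≠ j + 1 by omega)
  have hidentY : ∀ i, IdentDistrib (X (i + 1)) (X 1) μ μ :=
    fun i => (hident (i + 1)).trans (hident 1).symm
  have hSLLN := strong_law_ae_real (fun i => X (i + 1)) hint1 hindepY hidentY
  have hmean1 : μ[X 1] = m := by rw [(hident 1).integral_eq, hmean]
  rw [hmean1] at hSLLN
  filter_upwards [hSLLN] with ω hω
  -- convert the range-sum to an Icc-sum
  have hsum : ∀ N : ℕ, ∑ i ∈ Finset.Icc 1 N, X i ω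
      = ∑ i ∈ Finset.range N, X (i + 1) ω := by
    intro N
    induction N with
    | zero => simp
    | succ n ih =>
      rw [Finset.sum_Icc_succ_top (by omega : 1 ≤ n + 1), Finset.sum_range_succ, ih]
  have hS : Tendsto (fun N : ℕ => (N : ℝ)⁻¹ * ∑ i ∈ Finset.Icc 1 N, X i ω)
      atTop (𝓝 m) := by
    refine hω.congr fun N => ?_
    rw [hsum N, div_eq_inv_mul]
  have hB0 := batteryConst_div_tendsto_zero (fun j => X j ω) m c
    (fun i => hnonneg i ω) hm hc hS
  have hfinal := hS.sub hB0
  rw [sub_zero] at hfinal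
  refine hfinal.congr fun N => ?_
  rw [batteryConst_sum]
  ring
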